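/- Let n : ℕ, let f : EuclideanSpace ℝ (Fin n) → ℝ be differentiable with L-Lipschitz gradient (L ≥ 0), let S be a finite set of coordinates, and let (Ω, μ) be a probability space. Let g : Ω → EuclideanSpace ℝ (Fin n) with ω ↦ (g ω)∣S integrable, ω ↦ ‖(g ω)∣S‖^2 integrable, and ω ↦ f (x - (α*γ) • (g ω)∣S) integrable. Let d := ∫ (g ω)∣S ∂μ and assume ∫ ‖(g ω)∣S - d‖^2 ∂μ ≤ σ^2, the alignment condition ⟪(gradient f x)∣S, d⟫ ≥ α * ‖d‖^2 with 0 < α ≤ 1, and 0 < γ with γ * L ≤ 1. Then (1/2) * α^2 * ‖d‖^2 ≤ (f x - ∫ f (x - (α*γ) • (g ω)∣S) ∂μ) / γ + (γ * L / 2) * σ^2. -/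

import Mathlib

/-!
Apply the descent lemma `f (x + v) ≤ f x + ⟪∇f x, v⟫ + L/2 ‖v‖²` at `v = -αγ (g ω)∣S` and take
expectations. The mean `d` of the masked gradients is itself masked, so the linear term is
`αγ ⟪(∇f x)∣S, d⟫ ≥ α²γ ‖d‖²`; the bias–variance split
`E‖(g ω)∣S‖² = E‖(g ω)∣S - d‖² + ‖d‖²` bounds the quadratic term by `Lα²γ²/2 (σ² + ‖d‖²)`.
Since `γL ≤ 1`, its `‖d‖²` part costs at most half of the linear term, and `α ≤ 1` bounds its
`σ²` part by `γ²L/2 σ²`.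
-/

open MeasureTheory

/-- The masked vector `x∣S`: keeps coordinates in `S`, zeroes out the rest. -/
def mask {n : ℕ} (S : Finset (Fin n)) (x : EuclideanSpace ℝ (Fin n)) :
    EuclideanSpace ℝ (Fin n) :=
  WithLp.toLp 2 (fun i => if i ∈ S then x i else 0)

open scoped InnerProductSpace

section Descent

variable {F : Type*} [NormedAddCommGroup F] [InnerProductSpace ℝ F] [CompleteSpace F]
  {f : F → ℝ} {L : ℝ}

theorem DifferentiableAt.hasDerivAt_comp_add_smul {x v : F} {t : ℝ}
    (hf : DifferentiableAt ℝ f (x + t • v)) :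
    HasDerivAt (fun t : ℝ => f (x + t • v)) ⟪gradient f (x + t • v), v⟫_ℝ t := by
  have hline : HasDerivAt (fun t : ℝ => x + t • v) v t := by
    simpa using ((hasDerivAt_id t).smul_const v).const_add x
  rw [inner_gradient_left]
  exact hf.hasFDerivAt.comp_hasDerivAt t hline

theorem inner_gradient_add_smul_le
    (hlip : ∀ x y, ‖gradient f x - gradient f y‖ ≤ L * ‖x - y‖) (x v : F) {t : ℝ}
    (ht : 0 ≤ t) :
    ⟪gradient f (x + t • v), v⟫_ℝ ≤ ⟪gradient f x, v⟫_ℝ + L * t * ‖v‖ ^ 2 := by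
  have key : ⟪gradient f (x + t • v) - gradient f x, v⟫_ℝ ≤ L * t * ‖v‖ ^ 2 :=
    calc ⟪gradient f (x + t • v) - gradient f x, v⟫_ℝ
        ≤ ‖gradient f (x + t • v) - gradient f x‖ * ‖v‖ := real_inner_le_norm _ _
      _ ≤ L * ‖(x + t • v) - x‖ * ‖v‖ := by gcongr; exact hlip _ _
      _ = L * t * ‖v‖ ^ 2 := by
        rw [add_sub_cancel_left, norm_smul, Real.norm_of_nonneg ht]; ring
  rw [inner_sub_left] at key
  linarith

theorem Differentiable.apply_add_le_of_lipschitz_gradient (hf : Differentiable ℝ f)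
    (hlip : ∀ x y, ‖gradient f x - gradient f y‖ ≤ L * ‖x - y‖) (x v : F) :
    f (x + v) ≤ f x + ⟪gradient f x, v⟫_ℝ + L / 2 * ‖v‖ ^ 2 := by
  set c := ⟪gradient f x, v⟫_ℝ
  have hbound : ∀ t : ℝ, HasDerivAt (fun t => f x + t * c + L / 2 * ‖v‖ ^ 2 * t ^ 2)
      (c + L * t * ‖v‖ ^ 2) t := fun t => by
    have hlin : HasDerivAt (fun t : ℝ => t * c) c t := by
      simpa using (hasDerivAt_id t).mul_const c
    have hsq : HasDerivAt (fun t : ℝ => t ^ 2) (2 * t) t := by simpa using hasDerivAt_pow 2 t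
    exact ((hlin.const_add (f x)).add (hsq.const_mul (L / 2 * ‖v‖ ^ 2))).congr_deriv (by ring)
  have h := image_le_of_deriv_right_le_deriv_boundary (a := 0) (b := 1)
    (fun t _ => (hf _).hasDerivAt_comp_add_smul.continuousAt.continuousWithinAt)
    (fun t _ => (hf _).hasDerivAt_comp_add_smul.hasDerivWithinAt)
    (by simp) (fun t _ => (hbound t).continuousAt.continuousWithinAt)
    (fun t _ => (hbound t).hasDerivWithinAt)
    (fun t ht => inner_gradient_add_smul_le hlip x v ht.1) (Set.right_mem_Icc.2 zero_le_one)
  simpa using h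

theorem integral_apply_sub_smul_le_of_lipschitz_gradient {Ω : Type*} [MeasurableSpace Ω]
    {μ : Measure Ω} [IsProbabilityMeasure μ] (hf : Differentiable ℝ f)
    (hlip : ∀ x y, ‖gradient f x - gradient f y‖ ≤ L * ‖x - y‖) (x : F) (η : ℝ) {X : Ω → F}
    (hX : Integrable X μ) (hX₂ : Integrable (fun ω => ‖X ω‖ ^ 2) μ)
    (hfX : Integrable (fun ω => f (x - η • X ω)) μ) :
    ∫ ω, f (x - η • X ω) ∂μ ≤
      f x - η * ⟪gradient f x, ∫ ω, X ω ∂μ⟫_ℝ + L / 2 * η ^ 2 * ∫ ω, ‖X ω‖ ^ 2 ∂μ := by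
  have hpoint : ∀ ω, f (x - η • X ω) ≤
      f x - η * ⟪gradient f x, X ω⟫_ℝ + L / 2 * η ^ 2 * ‖X ω‖ ^ 2 := fun ω => by
    have h := hf.apply_add_le_of_lipschitz_gradient hlip x (-(η • X ω))
    rw [← sub_eq_add_neg, inner_neg_right, real_inner_smul_right, norm_neg, norm_smul,
      Real.norm_eq_abs, mul_pow, sq_abs] at h
    linarith
  have hlin : Integrable (fun ω => f x - η * ⟪gradient f x, X ω⟫_ℝ) μ :=
    (integrable_const _).sub ((hX.const_inner _).const_mul η)
  calc ∫ ω, f (x - η • X ω) ∂μ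
      ≤ ∫ ω, (f x - η * ⟪gradient f x, X ω⟫_ℝ + L / 2 * η ^ 2 * ‖X ω‖ ^ 2) ∂μ :=
        integral_mono hfX (hlin.add (hX₂.const_mul _)) hpoint
    _ = f x - η * ⟪gradient f x, ∫ ω, X ω ∂μ⟫_ℝ + L / 2 * η ^ 2 * ∫ ω, ‖X ω‖ ^ 2 ∂μ := by
        rw [integral_add hlin (hX₂.const_mul _), integral_sub (integrable_const _)
          ((hX.const_inner _).const_mul η), integral_const, integral_const_mul,
          integral_const_mul, integral_inner hX]
        simp only [probReal_univ, one_smul]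

end Descent

section Variance

variable {Ω E : Type*} [MeasurableSpace Ω] {μ : Measure Ω} [IsProbabilityMeasure μ]
  [NormedAddCommGroup E] [InnerProductSpace ℝ E] [CompleteSpace E] {X : Ω → E}

theorem integral_norm_sq_eq_integral_norm_sub_integral_sq_add (hX : Integrable X μ)
    (hX₂ : Integrable (fun ω => ‖X ω‖ ^ 2) μ) :
    ∫ ω, ‖X ω‖ ^ 2 ∂μ = ∫ ω, ‖X ω - ∫ ω', X ω' ∂μ‖ ^ 2 ∂μ + ‖∫ ω, X ω ∂μ‖ ^ 2 := by
  set m := ∫ ω, X ω ∂μ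
  have hinner : Integrable (fun ω => 2 * ⟪X ω, m⟫_ℝ) μ := (hX.inner_const m).const_mul 2
  have hdiff : Integrable (fun ω => ‖X ω‖ ^ 2 - 2 * ⟪X ω, m⟫_ℝ) μ := hX₂.sub hinner
  have hmean : ∫ ω, ⟪X ω, m⟫_ℝ ∂μ = ‖m‖ ^ 2 := by
    simp_rw [real_inner_comm m]
    rw [integral_inner hX, real_inner_self_eq_norm_sq]
  simp_rw [norm_sub_sq_real]
  rw [integral_add hdiff (integrable_const _), integral_sub hX₂ hinner, integral_const_mul,
    hmean, integral_const]
  simp only [probReal_univ, one_smul]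
  ring

end Variance

section Mask

variable {n : ℕ} (S : Finset (Fin n))

theorem inner_mask_left (a b : EuclideanSpace ℝ (Fin n)) :
    ⟪mask S a, b⟫_ℝ = ⟪a, mask S b⟫_ℝ := by
  simp only [PiLp.inner_apply, RCLike.inner_apply, conj_trivial, mask]
  refine Finset.sum_congr rfl fun i _ => ?_
  split_ifs <;> simp

@[simp]
theorem mask_mask (a : EuclideanSpace ℝ (Fin n)) : mask S (mask S a) = mask S a := by
  ext i
  simp only [mask, PiLp.toLp_apply]
  split_ifs <;> rfl

theorem inner_mask_integral_mask {Ω : Type*} [MeasurableSpace Ω] {μ : Measure Ω}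
    {g : Ω → EuclideanSpace ℝ (Fin n)} (hg : Integrable (fun ω => mask S (g ω)) μ)
    (a : EuclideanSpace ℝ (Fin n)) :
    ⟪mask S a, ∫ ω, mask S (g ω) ∂μ⟫_ℝ = ⟪a, ∫ ω, mask S (g ω) ∂μ⟫_ℝ := by
  simp_rw [← integral_inner hg, inner_mask_left, mask_mask]

end Mask

/-- Rearranged one-step inequality used at the start of the proof of
Theorem 1 of ProgFed, stated for a single step before telescoping. -/
theorem progfed_rearranged_step (n : ℕ) (f : EuclideanSpace ℝ (Fin n) → ℝ)
    (L : ℝ) (hL : 0 ≤ L) (hdiff : Differentiable ℝ f)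
    (hlip : ∀ x y, ‖gradient f x - gradient f y‖ ≤ L * ‖x - y‖)
    (S : Finset (Fin n)) (Ω : Type*) [MeasurableSpace Ω]
    (μ : Measure Ω) [IsProbabilityMeasure μ]
    (g : Ω → EuclideanSpace ℝ (Fin n))
    (x : EuclideanSpace ℝ (Fin n)) (α γ σ : ℝ)
    (hg₁ : Integrable (fun ω => mask S (g ω)) μ)
    (hg₂ : Integrable (fun ω => ‖mask S (g ω)‖ ^ 2) μ)
    (hg₃ : Integrable (fun ω => f (x - (α * γ) • mask S (g ω))) μ)
    (d : EuclideanSpace ℝ (Fin n)) (hd : d = ∫ ω, mask S (g ω) ∂μ)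
    (hvar : ∫ ω, ‖mask S (g ω) - d‖ ^ 2 ∂μ ≤ σ ^ 2)
    (halign : (inner ℝ (mask S (gradient f x)) d : ℝ) ≥ α * ‖d‖ ^ 2)
    (hα₀ : 0 < α) (hα₁ : α ≤ 1) (hγ : 0 < γ) (hγL : γ * L ≤ 1) :
    (1 / 2) * α ^ 2 * ‖d‖ ^ 2 ≤
      (f x - ∫ ω, f (x - (α * γ) • mask S (g ω)) ∂μ) / γ +
        (γ * L / 2) * σ ^ 2 := by
  have hdescent := integral_apply_sub_smul_le_of_lipschitz_gradient hdiff hlip x (α * γ) hg₁ hg₂ hg₃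
  rw [integral_norm_sq_eq_integral_norm_sub_integral_sq_add hg₁ hg₂, ← hd] at hdescent
  have hgrad : α * ‖d‖ ^ 2 ≤ ⟪gradient f x, d⟫_ℝ := by
    rwa [hd, ← inner_mask_integral_mask S hg₁, ← hd]
  have hα₂ : α ^ 2 ≤ 1 := pow_le_one₀ hα₀.le hα₁
  rw [div_add' _ _ _ hγ.ne', le_div_iff₀ hγ]
  linarith [mul_le_mul_of_nonneg_left hgrad (mul_pos hα₀ hγ).le,
    mul_nonneg (mul_nonneg (mul_nonneg (sq_nonneg α) hγ.le) (sq_nonneg ‖d‖)) (sub_nonneg.2 hγL),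
    mul_nonneg (mul_nonneg hL (sq_nonneg γ)) (mul_nonneg (sq_nonneg α) (sub_nonneg.2 hvar)),
    mul_nonneg (mul_nonneg hL (sq_nonneg γ)) (mul_nonneg (sub_nonneg.2 hα₂) (sq_nonneg σ))]
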